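/- Let F be a distortion-free watermarking operator, λ ∈ [0,1], and F_λ(P,k) = λ·F(P,k) + (1-λ)·P. Then the expected entropy of the weakened watermark is at least that of the original: E_k[H(F_λ(P,k))] ≥ E_k[H(F(P,k))]. -/

import Mathlib

open Finset

def IsDist {V : Type*} [Fintype V] (P : V → ℝ) : Prop :=
  (∀ x, 0 ≤ P x) ∧ ∑ x, P x = 1

noncomputable def entropy {V : Type*} [Fintype V] (P : V → ℝ) : ℝ :=
  ∑ x, Real.negMulLog (P x)

theorem concaveOn_entropy {V : Type*} [Fintype V] :
    ConcaveOn ℝ (Set.Ici (0 : V → ℝ)) entropy := by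
  refine ⟨convex_Ici 0, fun P hP Q hQ a b ha hb hab => ?_⟩
  simp only [entropy, Pi.add_apply, Pi.smul_apply, smul_eq_mul, mul_sum, ← sum_add_distrib]
  gcongr with x
  exact Real.concaveOn_negMulLog.2 (hP x) (hQ x) ha hb hab

/-- Entropy preservation of the weakened watermark `F_λ(P,k) = λ·F(P,k) + (1-λ)·P`:
`E_k[H(F_λ(P,k))] ≥ E_k[H(F(P,k))]`. -/
theorem weaker_watermark_entropy_preserve {V K : Type*} [Fintype V] [Fintype K]
    (w : K → ℝ) (hw : ∀ k, 0 ≤ w k) (hw1 : ∑ k, w k = 1)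
    (F : (V → ℝ) → K → (V → ℝ))
    (hFd : ∀ Q, IsDist Q → ∀ k, IsDist (F Q k))
    (hDF : ∀ Q, IsDist Q → ∀ x, ∑ k, w k * F Q k x = Q x)
    (lam : ℝ) (hlam : lam ∈ Set.Icc (0:ℝ) 1)
    (P : V → ℝ) (hP : IsDist P) :
    ∑ k, w k * entropy (fun x => lam * F P k x + (1 - lam) * P x)
      ≥ ∑ k, w k * entropy (F P k) := by
  obtain ⟨hlam0, hlam1⟩ := hlam
  have hF_nonneg (k : K) : F P k ∈ Set.Ici 0 := (hFd P hP k).1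
  have hP_nonneg : P ∈ Set.Ici 0 := hP.1
  set H := ∑ k, w k * entropy (F P k)
  have jensen : H ≤ entropy P := by
    have hmean : ∑ k, w k • F P k = P := funext fun x => by simpa using hDF P hP x
    simpa [hmean] using
      concaveOn_entropy.le_map_sum (t := univ) (fun k _ => hw k) hw1 fun k _ => hF_nonneg k
  have mix (k : K) : lam * entropy (F P k) + (1 - lam) * entropy P
      ≤ entropy (fun x => lam * F P k x + (1 - lam) * P x) :=
    concaveOn_entropy.2 (hF_nonneg k) hP_nonneg hlam0 (sub_nonneg.2 hlam1) (add_sub_cancel _ _)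
  calc H ≤ lam * H + (1 - lam) * entropy P := by nlinarith
    _ = ∑ k, w k * (lam * entropy (F P k) + (1 - lam) * entropy P) := by
      simp only [H, mul_add, sum_add_distrib, mul_sum, ← sum_mul, hw1]
      ring_nf
    _ ≤ _ := by gcongr with k; exacts [hw k, mix k]
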